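/- Fix β > 0. There exists a constant C > 0 depending only on β such that for all L ≥ 1 and all p ∈ ℝ, ∫_{-L/2}^{L/2} |Φ_L(p,q) − Φ_∞(p,q)|² dq ≤ C e^{2βp²} υ(L/2)². -/

import Mathlib

open MeasureTheory

/-- The Gaussian `υ(q) = (4π/β)^{1/2} e^{-(4π²/β) q²}`. -/
noncomputable def upsilon (β q : ℝ) : ℝ :=
  Real.sqrt (4 * Real.pi / β) * Real.exp (-(4 * Real.pi ^ 2 / β) * q ^ 2)

/-- The kernel `Φ_L(p,q) = e^{βp²} (1/L) Σ_{ξ ∈ ℤ/L} e^{-β(p-ξ/2)²} e^{2πiξq}`. -/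
noncomputable def PhiL (β L : ℝ) (p q : ℝ) : ℂ :=
  (Real.exp (β * p ^ 2) : ℝ) * (1 / (L : ℂ)) *
    ∑' j : ℤ, (Real.exp (-β * (p - (j : ℝ) / (2 * L)) ^ 2) : ℝ) *
      Complex.exp (2 * Real.pi * Complex.I * ((j : ℝ) / L) * q)

/-- The limiting kernel `Φ_∞(p,q) = e^{βp²} e^{4πipq} υ(q)`. -/
noncomputable def PhiInf (β : ℝ) (p q : ℝ) : ℂ :=
  (Real.exp (β * p ^ 2) : ℝ) * Complex.exp (4 * Real.pi * Complex.I * p * q) *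
    (upsilon β q : ℝ)

/-!
Poisson summation (Jacobi's theta transformation) shows that `Φ_L(p, ·)` is the `L`-periodisation
`∑ₙ Φ_∞(p, · - nL)` of `Φ_∞(p, ·)`, so `Φ_L - Φ_∞` is the sum over the images `n ≠ 0`. Since
`|Φ_∞(p, x)| = e^{βp²} υ(x)`, for `|q| ≤ L/2` the Gaussian decay of `υ` makes this sum at most a
constant times the nearest image `e^{βp²} υ(L - |q|)`. Finally
`(L - |q|)² ≥ L²/4 + (L/2 - |q|)` for `L ≥ 1`, so `υ(L - |q|)²` is `υ(L/2)²` times an exponential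
in `L/2 - |q|` whose integral over `[-L/2, L/2]` is bounded independently of `L`.
-/

open Real Set

lemma summable_exp_neg_mul_sq_sub_int_mul {c : ℝ} (hc : 0 < c) (x : ℝ) {s : ℝ} (hs : s ≠ 0) :
    Summable fun n : ℤ => exp (-c * (x - n * s) ^ 2) := by
  set τ : ℂ := Complex.I * (c * s ^ 2 / π : ℝ)
  set z : ℂ := Complex.I * (-(c * x * s) / π : ℝ)
  have hτ : 0 < τ.im := by
    simp only [τ, Complex.I_mul_im, Complex.ofReal_re]
    exact div_pos (mul_pos hc (pow_two_pos_of_ne_zero hs)) pi_pos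
  refine (((summable_jacobiTheta₂_term_iff z τ).mpr hτ).norm.mul_left (exp (-c * x ^ 2))).congr
    fun n => ?_
  simp only [norm_jacobiTheta₂_term, ← exp_add, τ, z, Complex.I_mul_im, Complex.ofReal_re]
  field_simp
  congr 1
  ring

lemma intervalIntegral_mono_on_of_nonneg {f g : ℝ → ℝ} {a b : ℝ} (hab : a ≤ b)
    (hf : ∀ x ∈ Icc a b, 0 ≤ f x) (hg : IntervalIntegrable g volume a b)
    (hfg : ∀ x ∈ Icc a b, f x ≤ g x) : ∫ x in a..b, f x ≤ ∫ x in a..b, g x := by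
  rw [intervalIntegral.integral_of_le hab, intervalIntegral.integral_of_le hab]
  exact integral_mono_of_nonneg
    (ae_restrict_of_forall_mem measurableSet_Ioc fun x hx => hf x (Ioc_subset_Icc_self hx))
    hg.1 (ae_restrict_of_forall_mem measurableSet_Ioc fun x hx => hfg x (Ioc_subset_Icc_self hx))

lemma integral_exp_neg_mul_sub_abs_le {k a : ℝ} (hk : 0 < k) (ha : 0 ≤ a) :
    ∫ x in -a..a, exp (-k * (a - |x|)) ≤ 2 / k := by
  have hsplit (x : ℝ) :
      exp (-k * (a - |x|)) ≤ exp (k * x + -(k * a)) + exp (-k * x + -(k * a)) := by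
    rcases abs_cases x with ⟨hx, -⟩ | ⟨hx, -⟩ <;> rw [hx]
    · exact le_add_of_le_of_nonneg (le_of_eq (by ring_nf)) (exp_pos _).le
    · exact le_add_of_nonneg_of_le (exp_pos _).le (le_of_eq (by ring_nf))
  have hint (m : ℝ) : IntervalIntegrable (fun x => exp (m * x + -(k * a))) volume (-a) a :=
    Continuous.intervalIntegrable (by fun_prop) _ _
  calc ∫ x in -a..a, exp (-k * (a - |x|))
      ≤ ∫ x in -a..a, (exp (k * x + -(k * a)) + exp (-k * x + -(k * a))) :=
        intervalIntegral.integral_mono_on (by linarith)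
          (Continuous.intervalIntegrable (by fun_prop) _ _) ((hint k).add (hint (-k)))
          fun x _ => hsplit x
    _ = (1 - exp (-(2 * k * a))) / k + (1 - exp (-(2 * k * a))) / k := by
        rw [intervalIntegral.integral_add (hint k) (hint (-k)),
          intervalIntegral.integral_comp_mul_add _ hk.ne',
          intervalIntegral.integral_comp_mul_add _ (neg_ne_zero.mpr hk.ne'), integral_exp,
          integral_exp]
        simp only [smul_eq_mul]
        ring_nf
        rw [exp_zero]
        ring
    _ ≤ 2 / k := by
        have := exp_pos (-(2 * k * a))
        rw [← add_div]; gcongr; linarith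

lemma sq_sub_abs_add_le_sq_sub_int_mul {L q : ℝ} (hL : 1 ≤ L) (hq : |q| ≤ L / 2) {n : ℤ}
    (hn : n ≠ 0) : (L - |q|) ^ 2 + ((n : ℝ) ^ 2 - 1) / 4 ≤ (q - n * L) ^ 2 := by
  have hA : 1 ≤ |(n : ℝ)| := by rw [← Int.cast_abs]; exact_mod_cast Int.one_le_abs hn
  have hdist : |(n : ℝ)| * L - |q| ≤ |q - n * L| := by
    have := abs_sub_abs_le_abs_sub ((n : ℝ) * L) q
    rw [abs_mul, abs_of_pos (by linarith : 0 < L), abs_sub_comm] at this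
    exact this
  have hsq : (|(n : ℝ)| * L - |q|) ^ 2 ≤ (q - n * L) ^ 2 := by
    rw [← sq_abs (q - n * L)]
    exact pow_le_pow_left₀ (by nlinarith [abs_nonneg q]) hdist 2
  rw [← sq_abs (n : ℝ)]
  nlinarith [abs_nonneg q, mul_nonneg (sub_nonneg.mpr hA) (sub_nonneg.mpr hL)]

lemma upsilon_nonneg (β x : ℝ) : 0 ≤ upsilon β x := by unfold upsilon; positivity

lemma upsilon_sub_int_mul_le {β L q : ℝ} (hβ : 0 < β) (hL : 1 ≤ L) (hq : |q| ≤ L / 2) {n : ℤ}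
    (hn : n ≠ 0) :
    upsilon β (q - n * L) ≤ exp (π ^ 2 / β) * upsilon β (L - |q|) * exp (-(π ^ 2 / β) * n ^ 2) := by
  have hquad := sq_sub_abs_add_le_sq_sub_int_mul hL hq hn
  have hexp : -(4 * π ^ 2 / β) * (q - n * L) ^ 2 ≤
      π ^ 2 / β + -(4 * π ^ 2 / β) * (L - |q|) ^ 2 + -(π ^ 2 / β) * n ^ 2 := by
    linear_combination mul_le_mul_of_nonneg_left hquad (by positivity : 0 ≤ 4 * π ^ 2 / β)
  simp only [upsilon]
  calc sqrt (4 * π / β) * exp (-(4 * π ^ 2 / β) * (q - n * L) ^ 2)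
      ≤ sqrt (4 * π / β) * exp (π ^ 2 / β + -(4 * π ^ 2 / β) * (L - |q|) ^ 2
          + -(π ^ 2 / β) * n ^ 2) := by gcongr
    _ = _ := by rw [exp_add, exp_add]; ring

lemma upsilon_sub_abs_sq_le {β L q : ℝ} (hβ : 0 < β) (hL : 1 ≤ L) (hq : |q| ≤ L / 2) :
    upsilon β (L - |q|) ^ 2 ≤ upsilon β (L / 2) ^ 2 * exp (-(8 * π ^ 2 / β) * (L / 2 - |q|)) := by
  have hquad : L ^ 2 / 4 + (L / 2 - |q|) ≤ (L - |q|) ^ 2 := by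
    nlinarith [mul_nonneg (sub_nonneg.mpr hL) (sub_nonneg.mpr hq)]
  have hc : 0 ≤ 4 * π ^ 2 / β := by positivity
  simp only [upsilon, mul_pow, ← exp_nat_mul]
  rw [mul_assoc, ← exp_add]
  gcongr
  push_cast
  linear_combination 2 * mul_le_mul_of_nonneg_left hquad hc

lemma norm_PhiInf (β p x : ℝ) : ‖PhiInf β p x‖ = exp (β * p ^ 2) * upsilon β x := by
  have hphase : ‖Complex.exp (4 * π * Complex.I * p * x)‖ = 1 := by
    rw [Complex.norm_exp]; simp
  rw [PhiInf, norm_mul, norm_mul, hphase, Complex.norm_real, Complex.norm_real,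
    norm_of_nonneg (exp_pos _).le, norm_of_nonneg (upsilon_nonneg β x), mul_one]

lemma PhiL_eq_tsum_PhiInf {β L : ℝ} (hβ : 0 < β) (hL : 0 < L) (p q : ℝ) :
    PhiL β L p q = ∑' n : ℤ, PhiInf β p (q - n * L) := by
  set a : ℂ := ((β / (4 * π * L ^ 2) : ℝ) : ℂ)
  set b : ℂ := β * p / (2 * π * L) + Complex.I * (q / L)
  have ha : 0 < a.re := by simp only [a, Complex.ofReal_re]; positivity
  have hπ : (π : ℂ) ≠ 0 := Complex.ofReal_ne_zero.mpr pi_ne_zero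
  have hL' : (L : ℂ) ≠ 0 := Complex.ofReal_ne_zero.mpr hL.ne'
  have hβ' : (β : ℂ) ≠ 0 := Complex.ofReal_ne_zero.mpr hβ.ne'
  have hterm (j : ℤ) : ((exp (-β * (p - j / (2 * L)) ^ 2) : ℝ) : ℂ) *
      Complex.exp (2 * π * Complex.I * ((j : ℝ) / L) * q) =
      Complex.exp (-β * p ^ 2) * Complex.exp (-π * a * j ^ 2 + 2 * π * b * j) := by
    rw [Complex.ofReal_exp, ← Complex.exp_add, ← Complex.exp_add]
    congr 1
    simp only [a, b]
    push_cast
    field_simp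
    ring
  have hdual (n : ℤ) : PhiInf β p (q - n * L) =
      (sqrt (4 * π / β) : ℂ) * Complex.exp (-π / a * (n + Complex.I * b) ^ 2) := by
    have hIb : Complex.I * b = β * p / (2 * π * L) * Complex.I - q / L := by
      linear_combination (q / L : ℂ) * Complex.I_sq
    have hexp : -π / a * (n + Complex.I * b) ^ 2 = β * p ^ 2 +
        4 * π * Complex.I * p * (q - n * L) + -(4 * π ^ 2 / β) * (q - n * L) ^ 2 := by
      rw [hIb]
      push_cast [a]
      linear_combination (norm := skip) (-β * p ^ 2 : ℂ) * Complex.I_sq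
      field_simp
      ring
    simp only [PhiInf, upsilon]
    push_cast
    rw [hexp, Complex.exp_add, Complex.exp_add]
    ring
  have hroot : a ^ (1 / 2 : ℂ) = ((L * sqrt (4 * π / β))⁻¹ : ℝ) := by
    rw [show (1 / 2 : ℂ) = ((1 / 2 : ℝ) : ℂ) by norm_num, ← Complex.ofReal_cpow (by positivity),
      ← Real.sqrt_eq_rpow]
    congr 1
    rw [Real.sqrt_eq_iff_mul_self_eq_of_pos (by positivity)]
    field_simp
    rw [sq_sqrt (by positivity)]
    field_simp
  simp_rw [PhiL, hterm, hdual, tsum_mul_left, Complex.tsum_exp_neg_quadratic ha, hroot, neg_mul,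
    Complex.exp_neg, Complex.ofReal_exp]
  push_cast
  field_simp

lemma exists_norm_PhiL_sub_PhiInf_le {β : ℝ} (hβ : 0 < β) :
    ∃ K > 0, ∀ L, 1 ≤ L → ∀ p q, |q| ≤ L / 2 →
      ‖PhiL β L p q - PhiInf β p q‖ ≤ K * exp (β * p ^ 2) * upsilon β (L - |q|) := by
  have hθ : Summable fun n : ℤ => exp (-(π ^ 2 / β) * n ^ 2) := by
    simpa using summable_exp_neg_mul_sq_sub_int_mul (c := π ^ 2 / β) (by positivity) 0 one_ne_zero
  refine ⟨exp (π ^ 2 / β) * ∑' n : ℤ, exp (-(π ^ 2 / β) * n ^ 2),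
    mul_pos (exp_pos _) (hθ.tsum_pos (fun _ => (exp_pos _).le) 0 (exp_pos _)),
    fun L hL p q hq => ?_⟩
  set f : ℤ → ℂ := fun n => PhiInf β p (q - n * L)
  have hf : Summable f := by
    refine Summable.of_norm ?_
    simp only [f, norm_PhiInf, upsilon]
    refine ((summable_exp_neg_mul_sq_sub_int_mul (c := 4 * π ^ 2 / β) (by positivity) q
      (by linarith : L ≠ 0)).mul_left (exp (β * p ^ 2) * sqrt (4 * π / β))).congr fun n => ?_
    ring
  have hdiff : PhiL β L p q - PhiInf β p q = ∑' n, if n = 0 then 0 else f n := by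
    rw [PhiL_eq_tsum_PhiInf hβ (by linarith) p q, hf.tsum_eq_add_tsum_ite 0]
    simp [f]
  have hterm (n : ℤ) : ‖if n = 0 then 0 else f n‖ ≤ exp (β * p ^ 2) * upsilon β (L - |q|) *
      exp (π ^ 2 / β) * exp (-(π ^ 2 / β) * n ^ 2) := by
    split_ifs with hn
    · rw [norm_zero]
      have := upsilon_nonneg β (L - |q|)
      positivity
    · calc ‖f n‖ = exp (β * p ^ 2) * upsilon β (q - n * L) := norm_PhiInf ..
        _ ≤ exp (β * p ^ 2) * (exp (π ^ 2 / β) * upsilon β (L - |q|) *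
            exp (-(π ^ 2 / β) * n ^ 2)) := by
          gcongr
          exact upsilon_sub_int_mul_le hβ hL hq hn
        _ = _ := by ring
  rw [hdiff]
  refine (tsum_of_norm_bounded (hθ.hasSum.mul_left _) hterm).trans_eq ?_
  ring

/-- there is a constant `C > 0` depending only on `β` such that for every
`L ≥ 1` and every `p ∈ ℝ`,
`∫_{-L/2}^{L/2} |Φ_L(p,q) − Φ_∞(p,q)|² dq ≤ C e^{2βp²} υ(L/2)²`. -/
theorem phiL_phiInf_L2_bound (β : ℝ) (hβ : 0 < β) :
    ∃ C : ℝ, 0 < C ∧ ∀ L : ℝ, 1 ≤ L → ∀ p : ℝ,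
      (∫ q in (-L / 2)..(L / 2), ‖PhiL β L p q - PhiInf β p q‖ ^ 2) ≤
        C * Real.exp (2 * β * p ^ 2) * upsilon β (L / 2) ^ 2 := by
  obtain ⟨K, hK, hnorm⟩ := exists_norm_PhiL_sub_PhiInf_le hβ
  set k := 8 * π ^ 2 / β
  refine ⟨2 * K ^ 2 / k, by positivity, fun L hL p => ?_⟩
  set M := K ^ 2 * exp (2 * β * p ^ 2) * upsilon β (L / 2) ^ 2
  have hpointwise (q : ℝ) (hq : q ∈ Icc (-L / 2) (L / 2)) :
      ‖PhiL β L p q - PhiInf β p q‖ ^ 2 ≤ M * exp (-k * (L / 2 - |q|)) := by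
    have hq' : |q| ≤ L / 2 := abs_le.mpr ⟨by linarith [hq.1], hq.2⟩
    calc ‖PhiL β L p q - PhiInf β p q‖ ^ 2
        ≤ (K * exp (β * p ^ 2) * upsilon β (L - |q|)) ^ 2 := by
          gcongr; exact hnorm L hL p q hq'
      _ = K ^ 2 * exp (2 * β * p ^ 2) * upsilon β (L - |q|) ^ 2 := by
          rw [mul_pow, mul_pow, ← exp_nat_mul]; ring_nf
      _ ≤ M * exp (-k * (L / 2 - |q|)) := by
          simp only [M, mul_assoc]; gcongr; exact upsilon_sub_abs_sq_le hβ hL hq'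
  calc (∫ q in (-L / 2)..(L / 2), ‖PhiL β L p q - PhiInf β p q‖ ^ 2)
      ≤ ∫ q in (-L / 2)..(L / 2), M * exp (-k * (L / 2 - |q|)) :=
        intervalIntegral_mono_on_of_nonneg (by linarith) (fun _ _ => by positivity)
          (Continuous.intervalIntegrable (by fun_prop) _ _) hpointwise
    _ ≤ M * (2 / k) := by
        rw [intervalIntegral.integral_const_mul, neg_div]
        gcongr
        exact integral_exp_neg_mul_sub_abs_le (by positivity) (by linarith)
    _ = 2 * K ^ 2 / k * exp (2 * β * p ^ 2) * upsilon β (L / 2) ^ 2 := by ring
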